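/- arXiv:math/9706203 — 3 statements merged into one kernel-verified Lean document; each statement's English description precedes it below -/
import Mathlib

section
/- The rotation R_y^{π/2} · R_x^{π/3} has infinite order: (R_y^{π/2} · R_x^{π/3})^n is not the identity matrix for any positive integer n. -/
open Real

/-- Rotation by angle `θ` about the x-axis. -/
noncomputable def Rx (θ : ℝ) : Matrix (Fin 3) (Fin 3) ℝ :=
  !![1, 0, 0; 0, Real.cos θ, -Real.sin θ; 0, Real.sin θ, Real.cos θ]

/-- Rotation by angle `θ` about the y-axis. -/
noncomputable def Ry (θ : ℝ) : Matrix (Fin 3) (Fin 3) ℝ :=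
  !![Real.cos θ, 0, Real.sin θ; 0, 1, 0; -Real.sin θ, 0, Real.cos θ]

noncomputable def M : Matrix (Fin 3) (Fin 3) ℝ :=
  !![0, Real.sqrt 3/2, 1/2; 0, 1/2, -(Real.sqrt 3/2); -1, 0, 0]

lemma hM : Ry (π / 2) * Rx (π / 3) = M := by
  rw [Rx, Ry, M, Real.cos_pi_div_two, Real.sin_pi_div_two, Real.cos_pi_div_three,
    Real.sin_pi_div_three, Matrix.mul_fin_three]
  norm_num

lemma hM2 : M * M = !![-(1/2), Real.sqrt 3/4, -(Real.sqrt 3/2 * (Real.sqrt 3/2));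
    Real.sqrt 3/2, 1/4, -(Real.sqrt 3/4); 0, -(Real.sqrt 3/2), -(1/2)] := by
  rw [M, Matrix.mul_fin_three]
  ext i j
  fin_cases i <;> fin_cases j <;> simp <;> ring

lemma hM3 : M ^ 3 = (2⁻¹ : ℝ) • M ^ 2 - (2⁻¹ : ℝ) • M + 1 := by
  have h3 : Real.sqrt 3 * Real.sqrt 3 = 3 := Real.mul_self_sqrt (by norm_num)
  have : M ^ 3 = (M * M) * M := by rw [pow_succ, pow_two]
  rw [this, hM2, pow_two, hM2, M, Matrix.mul_fin_three]
  ext i j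
  fin_cases i <;> fin_cases j <;>
    simp [Matrix.one_apply, Matrix.smul_apply] <;> nlinarith [h3]

def u : ℕ → ℤ
  | 0 => 2
  | 1 => -1
  | (n+2) => -u (n+1) - 4 * u n

lemma u_odd : ∀ n, Odd (u (n+1)) := by
  intro n
  induction n with
  | zero => exact ⟨-1, by rfl⟩
  | succ k ih =>
    obtain ⟨m, hm⟩ := ih
    exact ⟨-m - 2 * u k - 1, by show -u (k+1) - 4 * u k = _; omega⟩

lemma trace_M : ∀ n, Matrix.trace (M ^ n) = 1 + (u n : ℝ) / 2 ^ n := by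
  have key : ∀ n, Matrix.trace (M ^ (n+3)) =
      2⁻¹ * Matrix.trace (M ^ (n+2)) - 2⁻¹ * Matrix.trace (M ^ (n+1))
        + Matrix.trace (M ^ n) := by
    intro n
    have : M ^ (n+3) = (2⁻¹ : ℝ) • M ^ (n+2) - (2⁻¹ : ℝ) • M ^ (n+1) + M ^ n := by
      have h : M ^ (n+3) = M ^ n * M ^ 3 := by rw [← pow_add]
      rw [h, hM3, mul_add, mul_sub, Matrix.mul_smul, Matrix.mul_smul, mul_one,
        ← pow_add, ← pow_succ]
    rw [this, Matrix.trace_add, Matrix.trace_sub, Matrix.trace_smul, Matrix.trace_smul]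
    simp
  have h0 : Matrix.trace (M ^ 0) = 3 := by simp
  have h1 : Matrix.trace (M ^ 1) = 1/2 := by
    rw [pow_one, M, Matrix.trace_fin_three]; simp [Matrix.cons_val]
  have h2 : Matrix.trace (M ^ 2) = -(3/4) := by
    have h3 : Real.sqrt 3 * Real.sqrt 3 = 3 := Real.mul_self_sqrt (by norm_num)
    rw [pow_two, hM2, Matrix.trace_fin_three]; simp [Matrix.cons_val]; norm_num
  have main : ∀ n, (Matrix.trace (M ^ n) = 1 + (u n : ℝ) / 2 ^ n) ∧
      (Matrix.trace (M ^ (n+1)) = 1 + (u (n+1) : ℝ) / 2 ^ (n+1)) ∧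
      (Matrix.trace (M ^ (n+2)) = 1 + (u (n+2) : ℝ) / 2 ^ (n+2)) := by
    intro n
    induction n with
    | zero =>
      refine ⟨by rw [h0]; norm_num [u], by rw [h1]; norm_num [u], by rw [h2]; norm_num [u]⟩
    | succ k ih =>
      obtain ⟨ha, hb, hc⟩ := ih
      refine ⟨hb, hc, ?_⟩
      rw [key k, ha, hb, hc]
      have hu : (u (k+3) : ℝ) = -(u (k+2) : ℝ) - 4 * (u (k+1) : ℝ) := by
        push_cast [show u (k+3) = -u (k+2) - 4 * u (k+1) from rfl]; ring
      have hu2 : (u (k+2) : ℝ) = -(u (k+1) : ℝ) - 4 * (u k : ℝ) := by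
        push_cast [show u (k+2) = -u (k+1) - 4 * u k from rfl]; ring
      rw [hu, hu2]
      have h2k : (2:ℝ) ^ k ≠ 0 := by positivity
      field_simp
      ring
  exact fun n => (main n).1

/-- The rotation `R_y^{π/2} · R_x^{π/3}` has infinite order: `(R_y^{π/2} · R_x^{π/3})^n`
is not the identity matrix for any positive integer `n`. -/
theorem infinite_order (n : ℕ) (hn : 0 < n) : (Ry (π / 2) * Rx (π / 3)) ^ n ≠ 1 := by
  rw [hM]
  intro h
  have ht : Matrix.trace (M ^ n) = 3 := by rw [h]; simp
  rw [trace_M n] at ht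
  have h2n : (2:ℝ) ^ n ≠ 0 := by positivity
  have : (u n : ℝ) = 2 * 2 ^ n := by field_simp at ht; linarith
  have hr : (u n : ℝ) = ((2 ^ (n+1) : ℤ) : ℝ) := by push_cast; rw [pow_succ]; linarith
  have hint : u n = 2 ^ (n+1) := by exact_mod_cast hr
  obtain ⟨m, hmn⟩ := Nat.exists_eq_add_of_lt hn
  have hodd := u_odd (m)
  rw [show m + 1 = n by omega, hint] at hodd
  have hev : Even ((2:ℤ) ^ (n+1)) := ⟨2 ^ n, by ring⟩
  exact (Int.not_odd_iff_even.mpr hev) hodd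
end

section
/- The subgroup of SO(3) generated by the rotation by π/3 about the x-axis and the rotation by π/2 about the y-axis is infinite. -/
open Real

noncomputable def Rz (θ : ℝ) : Matrix (Fin 3) (Fin 3) ℝ :=
  !![Real.cos θ, -Real.sin θ, 0; Real.sin θ, Real.cos θ, 0; 0, 0, 1]

lemma Rx_mul (a b : ℝ) : Rx a * Rx b = Rx (a + b) := by
  ext i j
  fin_cases i <;> fin_cases j <;>
    simp [Rx, Matrix.mul_apply, Fin.sum_univ_three, Real.cos_add, Real.sin_add, Matrix.vecHead, Matrix.vecTail] <;> ring

lemma Ry_mul (a b : ℝ) : Ry a * Ry b = Ry (a + b) := by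
  ext i j
  fin_cases i <;> fin_cases j <;>
    simp [Ry, Matrix.mul_apply, Fin.sum_univ_three, Real.cos_add, Real.sin_add, Matrix.vecHead, Matrix.vecTail] <;> ring

lemma Rz_mul (a b : ℝ) : Rz a * Rz b = Rz (a + b) := by
  ext i j
  fin_cases i <;> fin_cases j <;>
    simp [Rz, Matrix.mul_apply, Fin.sum_univ_three, Real.cos_add, Real.sin_add, Matrix.vecHead, Matrix.vecTail] <;> ring

lemma Rx_zero : Rx 0 = 1 := by
  ext i j
  fin_cases i <;> fin_cases j <;> simp [Rx, Matrix.one_apply, Matrix.vecHead, Matrix.vecTail]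

lemma Ry_zero : Ry 0 = 1 := by
  ext i j
  fin_cases i <;> fin_cases j <;> simp [Ry, Matrix.one_apply, Matrix.vecHead, Matrix.vecTail]

lemma Rz_zero : Rz 0 = 1 := by
  ext i j
  fin_cases i <;> fin_cases j <;> simp [Rz, Matrix.one_apply, Matrix.vecHead, Matrix.vecTail]

noncomputable def RxGL (θ : ℝ) : GL (Fin 3) ℝ :=
  ⟨Rx θ, Rx (-θ), by rw [Rx_mul, add_neg_cancel, Rx_zero], by rw [Rx_mul, neg_add_cancel, Rx_zero]⟩

noncomputable def RyGL (θ : ℝ) : GL (Fin 3) ℝ :=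
  ⟨Ry θ, Ry (-θ), by rw [Ry_mul, add_neg_cancel, Ry_zero], by rw [Ry_mul, neg_add_cancel, Ry_zero]⟩

noncomputable def RzGL (θ : ℝ) : GL (Fin 3) ℝ :=
  ⟨Rz θ, Rz (-θ), by rw [Rz_mul, add_neg_cancel, Rz_zero], by rw [Rz_mul, neg_add_cancel, Rz_zero]⟩


noncomputable def Mmat : Matrix (Fin 3) (Fin 3) ℝ :=
  !![0, 0, 1; Real.sqrt 3 / 2, 1/2, 0; -(1/2), Real.sqrt 3 / 2, 0]

lemma Mmat_cubic : Mmat ^ 3 = (1/2 : ℝ) • (Mmat ^ 2 - Mmat) + 1 := by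
  have h3 : Real.sqrt 3 * Real.sqrt 3 = 3 := Real.mul_self_sqrt (by norm_num)
  ext i j
  fin_cases i <;> fin_cases j <;>
    simp [Mmat, pow_succ, Matrix.mul_apply, Fin.sum_univ_three, Matrix.one_apply,
      Matrix.vecHead, Matrix.vecTail] <;> nlinarith [h3]

def aa : ℕ → ℤ
  | 0 => 2
  | 1 => -1
  | (n+2) => -aa (n+1) - 4 * aa n

lemma aa_odd : ∀ n, Odd (aa (n+1)) := by
  intro n
  induction n using Nat.strong_induction_on with
  | _ n ih =>
    match n with
    | 0 => exact ⟨-1, by norm_num [aa]⟩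
    | (m+1) =>
      obtain ⟨k, hk⟩ := ih m (by omega)
      exact ⟨-k - 2 * aa m - 1, by simp only [aa]; omega⟩

lemma Mmat_trace : ∀ n, Matrix.trace (Mmat ^ n) = 1 + (aa n : ℝ) / 2 ^ n := by
  intro n
  induction n using Nat.strong_induction_on with
  | _ n ih =>
    match n with
    | 0 => norm_num [aa, Matrix.trace]
    | 1 =>
      simp [aa, Mmat, Matrix.trace, Fin.sum_univ_three, Matrix.diag, Matrix.vecHead,
        Matrix.vecTail]
      norm_num
    | 2 =>
      have : aa 2 = -7 := by norm_num [aa]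
      rw [this]
      simp [Mmat, pow_succ, Matrix.trace, Matrix.mul_apply, Fin.sum_univ_three,
        Matrix.diag, Matrix.vecHead, Matrix.vecTail]
      norm_num
    | (m+3) =>
      have h1 := ih m (by omega)
      have h2 := ih (m+1) (by omega)
      have h3 := ih (m+2) (by omega)
      have hp : Mmat ^ (m+3) = Mmat ^ m * ((1/2 : ℝ) • (Mmat ^ 2 - Mmat) + 1) := by
        rw [← Mmat_cubic, ← pow_add]
      rw [hp, mul_add, mul_one, mul_smul_comm, mul_sub, ← pow_add, ← pow_succ,
        Matrix.trace_add, Matrix.trace_smul, Matrix.trace_sub, h1, h2, h3]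
      have e1 : aa (m + 3) = -aa (m+2) - 4 * aa (m+1) := rfl
      have e2 : aa (m + 2) = -aa (m+1) - 4 * aa m := rfl
      rw [e1, e2]
      push_cast
      ring

lemma Mmat_pow_ne_one {n : ℕ} (hn : n ≠ 0) : Mmat ^ n ≠ 1 := by
  intro h
  have ht := Mmat_trace n
  rw [h] at ht
  have htr : Matrix.trace (1 : Matrix (Fin 3) (Fin 3) ℝ) = 3 := by
    simp [Matrix.trace_one]
  rw [htr] at ht
  have h2 : ((aa n : ℝ)) = 2 ^ (n + 1) := by
    have hpow : (2 : ℝ) ^ n ≠ 0 := by positivity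
    field_simp at ht
    rw [pow_succ]
    linarith
  have h3 : aa n = 2 ^ (n + 1) := by exact_mod_cast h2
  obtain ⟨m, hm⟩ := n.exists_eq_succ_of_ne_zero hn
  obtain ⟨k, hk⟩ := aa_odd m
  rw [hm, hk, pow_succ] at h3
  have : Even ((2 : ℤ) ^ (m + 1) * 2) := ⟨2 ^ (m + 1), by ring⟩
  omega

lemma RxRy_eq : Rx (π/3) * Ry (π/2) = Mmat := by
  ext i j
  fin_cases i <;> fin_cases j <;>
    simp [Rx, Ry, Mmat, Matrix.mul_apply, Fin.sum_univ_three, Real.cos_pi_div_three,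
      Real.sin_pi_div_three, Real.cos_pi_div_two, Real.sin_pi_div_two,
      Matrix.vecHead, Matrix.vecTail]

/-- The subgroup of the rotation group generated by the rotation by `π/3` about the x-axis
and the rotation by `π/2` about the y-axis (the group `Ĝ(6,4)` of orientations in the
quaquaversal tiling) is infinite. -/
theorem quaquaversal_group_infinite :
    Infinite (Subgroup.closure ({RxGL (π / 3), RyGL (π / 2)} : Set (GL (Fin 3) ℝ))) := by
  set g : GL (Fin 3) ℝ := RxGL (π/3) * RyGL (π/2) with hg
  have hval : (↑g : Matrix (Fin 3) (Fin 3) ℝ) = Mmat := by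
    rw [hg, Units.val_mul]
    exact RxRy_eq
  have hfin : ¬ IsOfFinOrder g := by
    rw [isOfFinOrder_iff_pow_eq_one]
    rintro ⟨n, hn, h1⟩
    apply Mmat_pow_ne_one hn.ne'
    have := congrArg Units.val h1
    rw [Units.val_pow_eq_pow_val, hval, Units.val_one] at this
    exact this
  have hmem : g ∈ Subgroup.closure ({RxGL (π / 3), RyGL (π / 2)} : Set (GL (Fin 3) ℝ)) :=
    mul_mem (Subgroup.subset_closure (Set.mem_insert _ _))
      (Subgroup.subset_closure (Set.mem_insert_of_mem _ rfl))
  have hinf : ((Subgroup.zpowers g : Subgroup (GL (Fin 3) ℝ)) : Set (GL (Fin 3) ℝ)).Infinite :=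
    infinite_zpowers.mpr hfin
  exact Set.infinite_coe_iff.mpr (hinf.mono (Subgroup.zpowers_le.mpr hmem))
end

section
/- If p and q are positive integers both divisible by 4, then the subgroup of SO(3) generated by A = R_x^{2π/p} and C = R_z^{2π/q} contains the quarter-turn S = R_y^{π/2} and the rotation R_x^{2π/s} where s = lcm(p,q); consequently this subgroup equals the subgroup generated by R_x^{2π/s} and R_y^{π/2}. -/
open Real

lemma RxGL_mul' (a b : ℝ) : RxGL a * RxGL b = RxGL (a + b) := Units.ext (Rx_mul a b)

lemma RzGL_mul' (a b : ℝ) : RzGL a * RzGL b = RzGL (a + b) := Units.ext (Rz_mul a b)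

lemma RxGL_one : RxGL 0 = 1 := Units.ext Rx_zero

lemma RzGL_one : RzGL 0 = 1 := Units.ext Rz_zero

lemma RxGL_inv (θ : ℝ) : (RxGL θ)⁻¹ = RxGL (-θ) := Units.ext rfl

lemma RzGL_inv (θ : ℝ) : (RzGL θ)⁻¹ = RzGL (-θ) := Units.ext rfl

lemma RxGL_npow (θ : ℝ) (n : ℕ) : RxGL θ ^ n = RxGL (n * θ) := by
  induction n with
  | zero => simp [RxGL_one]
  | succ m ih =>
      rw [pow_succ, ih, RxGL_mul']
      push_cast
      ring_nf

lemma RxGL_zpow (θ : ℝ) (n : ℤ) : RxGL θ ^ n = RxGL (n * θ) := by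
  induction n using Int.rec with
  | ofNat m => rw [Int.ofNat_eq_coe, zpow_natCast, RxGL_npow]; push_cast; ring_nf
  | negSucc m =>
      rw [zpow_negSucc, RxGL_npow, RxGL_inv]
      congr 1
      push_cast
      ring

lemma RzGL_npow (θ : ℝ) (n : ℕ) : RzGL θ ^ n = RzGL (n * θ) := by
  induction n with
  | zero => simp [RzGL_one]
  | succ m ih =>
      rw [pow_succ, ih, RzGL_mul']
      push_cast
      ring_nf

lemma RzGL_zpow (θ : ℝ) (n : ℤ) : RzGL θ ^ n = RzGL (n * θ) := by
  induction n using Int.rec with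
  | ofNat m => rw [Int.ofNat_eq_coe, zpow_natCast, RzGL_npow]; push_cast; ring_nf
  | negSucc m =>
      rw [zpow_negSucc, RzGL_npow, RzGL_inv]
      congr 1
      push_cast
      ring

lemma Ry_pio2_eq : Ry (π / 2) = Rx (-(π / 2)) * Rz (π / 2) * Rx (π / 2) := by
  ext i j
  fin_cases i <;> fin_cases j <;>
    simp [Rx, Ry, Rz, Matrix.mul_apply, Fin.sum_univ_three, Matrix.vecHead, Matrix.vecTail,
      Real.cos_pi_div_two, Real.sin_pi_div_two]

lemma conj_Rz (θ : ℝ) : Ry (π / 2) * Rz θ * Ry (-(π / 2)) = Rx θ := by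
  ext i j
  fin_cases i <;> fin_cases j <;>
    simp [Rx, Ry, Rz, Matrix.mul_apply, Fin.sum_univ_three, Matrix.vecHead, Matrix.vecTail,
      Real.cos_pi_div_two, Real.sin_pi_div_two]

lemma RyGL_pio2_eq : RyGL (π / 2) = RxGL (-(π / 2)) * RzGL (π / 2) * RxGL (π / 2) :=
  Units.ext Ry_pio2_eq

lemma conj_RzGL (θ : ℝ) : RyGL (π / 2) * RzGL θ * (RyGL (π / 2))⁻¹ = RxGL θ :=
  Units.ext (conj_Rz θ)

lemma RzGL_eq_conj (θ : ℝ) :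
    RzGL θ = (RyGL (π / 2))⁻¹ * RxGL θ * RyGL (π / 2) := by
  rw [← conj_RzGL θ]
  group

/-- If `p` and `q` are positive integers both divisible by 4, then the subgroup generated by
`A = R_x^{2π/p}` and `C = R_z^{2π/q}` contains the quarter-turn `S = R_y^{π/2}` and the
rotation `R_x^{2π/s}` where `s = lcm(p,q)`; consequently this subgroup equals the subgroup
generated by `R_x^{2π/s}` and `R_y^{π/2}`. -/
theorem closure_eq_of_four_dvd (p q : ℕ) (hp : 0 < p) (hq : 0 < q)
    (hp4 : 4 ∣ p) (hq4 : 4 ∣ q) :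
    RyGL (π / 2) ∈
        Subgroup.closure ({RxGL (2 * π / p), RzGL (2 * π / q)} : Set (GL (Fin 3) ℝ)) ∧
    RxGL (2 * π / (Nat.lcm p q)) ∈
        Subgroup.closure ({RxGL (2 * π / p), RzGL (2 * π / q)} : Set (GL (Fin 3) ℝ)) ∧
    Subgroup.closure ({RxGL (2 * π / p), RzGL (2 * π / q)} : Set (GL (Fin 3) ℝ)) =
      Subgroup.closure
        ({RxGL (2 * π / (Nat.lcm p q)), RyGL (π / 2)} : Set (GL (Fin 3) ℝ)) := by

  have hπ := Real.pi_pos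
  have hp0 : (p : ℝ) ≠ 0 := Nat.cast_ne_zero.mpr hp.ne'
  have hq0 : (q : ℝ) ≠ 0 := Nat.cast_ne_zero.mpr hq.ne'
  have hs : 0 < Nat.lcm p q := Nat.pos_of_ne_zero (Nat.lcm_ne_zero hp.ne' hq.ne')
  have hs0 : ((Nat.lcm p q : ℕ) : ℝ) ≠ 0 := Nat.cast_ne_zero.mpr hs.ne'
  set K := Subgroup.closure ({RxGL (2 * π / p), RzGL (2 * π / q)} : Set (GL (Fin 3) ℝ)) with hK
  have hA : RxGL (2 * π / p) ∈ K := Subgroup.subset_closure (by simp)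
  have hC : RzGL (2 * π / q) ∈ K := Subgroup.subset_closure (by simp)
  have hxk : ∀ n : ℤ, RxGL (n * (2 * π / p)) ∈ K := fun n => by
    rw [← RxGL_zpow]; exact Subgroup.zpow_mem K hA n
  have hzk : ∀ n : ℤ, RzGL (n * (2 * π / q)) ∈ K := fun n => by
    rw [← RzGL_zpow]; exact Subgroup.zpow_mem K hC n
  obtain ⟨a, rfl⟩ := hp4
  obtain ⟨b, rfl⟩ := hq4
  have ha0 : (a : ℝ) ≠ 0 := by
    intro h; apply hp0; rw [Nat.cast_mul, h, mul_zero]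
  have hb0 : (b : ℝ) ≠ 0 := by
    intro h; apply hq0; rw [Nat.cast_mul, h, mul_zero]
  have ex1 : ((a : ℤ) : ℝ) * (2 * π / (4 * a : ℕ)) = π / 2 := by
    push_cast; field_simp; ring
  have ex2 : ((-(a : ℤ) : ℤ) : ℝ) * (2 * π / (4 * a : ℕ)) = -(π / 2) := by
    push_cast; field_simp; ring
  have ez1 : ((b : ℤ) : ℝ) * (2 * π / (4 * b : ℕ)) = π / 2 := by
    push_cast; field_simp; ring
  have hxh : RxGL (π / 2) ∈ K := by have := hxk a; rwa [ex1] at this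
  have hxnh : RxGL (-(π / 2)) ∈ K := by have := hxk (-(a : ℤ)); rwa [ex2] at this
  have hzh : RzGL (π / 2) ∈ K := by have := hzk b; rwa [ez1] at this
  have hS : RyGL (π / 2) ∈ K := by
    rw [RyGL_pio2_eq]
    exact mul_mem (mul_mem hxnh hzh) hxh
  have hxq : RxGL (2 * π / (4 * b : ℕ)) ∈ K := by
    rw [← conj_RzGL]
    exact mul_mem (mul_mem hS hC) (inv_mem hS)
  have hxqk : ∀ n : ℤ, RxGL (n * (2 * π / (4 * b : ℕ))) ∈ K := fun n => by
    rw [← RxGL_zpow]; exact Subgroup.zpow_mem K hxq n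
  -- Bezout
  set p' := 4 * a with hp'
  set q' := 4 * b with hq'
  have hg : ((Nat.gcd p' q' : ℤ) : ℝ) = (p' : ℝ) * (Nat.gcdA p' q' : ℝ) + (q' : ℝ) * (Nat.gcdB p' q' : ℝ) := by
    exact_mod_cast congrArg (fun z : ℤ => (z : ℝ)) (Nat.gcd_eq_gcd_ab p' q')
  have hlg : ((Nat.gcd p' q' : ℕ) : ℝ) * ((Nat.lcm p' q' : ℕ) : ℝ) = (p' : ℝ) * (q' : ℝ) := by
    exact_mod_cast congrArg (fun n : ℕ => (n : ℝ)) (Nat.gcd_mul_lcm p' q')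
  have key : ((Nat.gcdA p' q' : ℤ) : ℝ) * (2 * π / q') + ((Nat.gcdB p' q' : ℤ) : ℝ) * (2 * π / p')
      = 2 * π / (Nat.lcm p' q') := by
    have hgcd0 : ((Nat.gcd p' q' : ℕ) : ℝ) ≠ 0 := by
      have := Nat.gcd_pos_of_pos_left q' hp
      exact Nat.cast_ne_zero.mpr this.ne'
    field_simp
    have : ((Nat.gcdA p' q' : ℤ) : ℝ) * (p' : ℝ) + ((Nat.gcdB p' q' : ℤ) : ℝ) * (q' : ℝ)
        = ((Nat.gcd p' q' : ℕ) : ℝ) := by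
      push_cast at hg ⊢; linarith
    linear_combination (((Nat.lcm p' q' : ℕ) : ℝ)) * this + hlg
  have hxs : RxGL (2 * π / (Nat.lcm p' q')) ∈ K := by
    have h1 := hxqk (Nat.gcdA p' q')
    have h2 := hxk (Nat.gcdB p' q')
    have := mul_mem h1 h2
    rwa [RxGL_mul', key] at this
  refine ⟨hS, hxs, le_antisymm ?_ ?_⟩
  · -- K ≤ closure {Rx(2π/s), Ry(π/2)} : show generators of K are in RHS
    set K' := Subgroup.closure
        ({RxGL (2 * π / (Nat.lcm p' q')), RyGL (π / 2)} : Set (GL (Fin 3) ℝ)) with hK'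
    have hX' : RxGL (2 * π / (Nat.lcm p' q')) ∈ K' := Subgroup.subset_closure (by simp)
    have hS' : RyGL (π / 2) ∈ K' := Subgroup.subset_closure (by simp)
    have hxk' : ∀ n : ℤ, RxGL (n * (2 * π / (Nat.lcm p' q'))) ∈ K' := fun n => by
      rw [← RxGL_zpow]; exact Subgroup.zpow_mem K' hX' n
    obtain ⟨m, hm⟩ := Nat.dvd_lcm_left p' q'
    obtain ⟨k, hk⟩ := Nat.dvd_lcm_right p' q'
    have hm0 : (m : ℝ) ≠ 0 := by
      intro h; apply hs0; rw [hm]; push_cast; rw [h, mul_zero]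
    have hk0 : (k : ℝ) ≠ 0 := by
      intro h; apply hs0; rw [hk]; push_cast; rw [h, mul_zero]
    have eA : ((m : ℤ) : ℝ) * (2 * π / (Nat.lcm p' q')) = 2 * π / p' := by
      rw [hm]; push_cast; field_simp
    have eC : ((k : ℤ) : ℝ) * (2 * π / (Nat.lcm p' q')) = 2 * π / q' := by
      rw [hk]; push_cast; field_simp
    have hA' : RxGL (2 * π / p') ∈ K' := by have := hxk' m; rwa [eA] at this
    have hxq' : RxGL (2 * π / q') ∈ K' := by have := hxk' k; rwa [eC] at this
    have hC' : RzGL (2 * π / q') ∈ K' := by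
      rw [RzGL_eq_conj]
      exact mul_mem (mul_mem (inv_mem hS') hxq') hS'
    rw [hK]
    refine (Subgroup.closure_le _).mpr ?_
    intro x hx
    rcases hx with h | h
    · rw [h]; exact hA'
    · rw [Set.mem_singleton_iff] at h; rw [h]; exact hC'
  · refine (Subgroup.closure_le _).mpr ?_
    intro x hx
    rcases hx with h | h
    · rw [h]; exact hxs
    · rw [Set.mem_singleton_iff] at h; rw [h]; exact hS
end
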